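/- Let n ≥ 2 and S ⊆ ℤ^n. Then S is closed under the median operation if and only if S = ⋈_{1≤i<j≤n} cl_median(π_{i,j}(S)). -/

import Mathlib

/-- Componentwise closedness of a set of `ι`-indexed integer vectors under a
`k`-ary operation `f : ℤ^k → ℤ`. -/
def CptClosed {k : ℕ} {ι : Type*} (f : (Fin k → ℤ) → ℤ) (S : Set (ι → ℤ)) : Prop :=
  ∀ x : Fin k → ι → ℤ, (∀ l, x l ∈ S) → (fun i => f (fun l => x l i)) ∈ S

/-- `f : ℤ³ → ℤ` is a majority operation. -/
def IsMajorityOp (f : (Fin 3 → ℤ) → ℤ) : Prop :=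
  ∀ a b : ℤ, f ![a, a, b] = a ∧ f ![a, b, a] = a ∧ f ![b, a, a] = a

/-- `S` is closed under some majority operation. -/
def MajClosed {ι : Type*} (S : Set (ι → ℤ)) : Prop :=
  ∃ f : (Fin 3 → ℤ) → ℤ, IsMajorityOp f ∧ CptClosed f S

/-- The projection `π_{i,j}(x) = (x_i, x_j)`. -/
def proj2 {n : ℕ} (i j : Fin n) (x : Fin n → ℤ) : Fin 2 → ℤ := ![x i, x j]

/-- The projection `π_{i,j}(S)`. -/
def projSet {n : ℕ} (i j : Fin n) (S : Set (Fin n → ℤ)) : Set (Fin 2 → ℤ) :=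
  proj2 i j '' S

/-- The join `⋈_{1 ≤ i < j ≤ n} F i j`. -/
def joinPairs {n : ℕ} (F : Fin n → Fin n → Set (Fin 2 → ℤ)) : Set (Fin n → ℤ) :=
  {x | ∀ i j : Fin n, i < j → proj2 i j x ∈ F i j}

/-- The `f`-closure of `S`: the intersection of all `f`-closed supersets of `S`. -/
def clOp {k m : ℕ} (f : (Fin k → ℤ) → ℤ) (S : Set (Fin m → ℤ)) : Set (Fin m → ℤ) :=
  ⋂₀ {T | S ⊆ T ∧ CptClosed f T}

/-- The directed discrete midpoint operation `μ`. -/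
def muOp : (Fin 2 → ℤ) → ℤ := fun t =>
  if t 1 ≤ t 0 then ⌈((t 0 + t 1 : ℤ) : ℚ) / 2⌉ else ⌊((t 0 + t 1 : ℤ) : ℚ) / 2⌋

/-- The operation `g(x,y) = ⌈(x+y)/2⌉`. -/
def ceilAvgOp : (Fin 2 → ℤ) → ℤ := fun t => ⌈((t 0 + t 1 : ℤ) : ℚ) / 2⌉

/-- The operation `h(x,y) = ⌊(x+y)/2⌋`. -/
def floorAvgOp : (Fin 2 → ℤ) → ℤ := fun t => ⌊((t 0 + t 1 : ℤ) : ℚ) / 2⌋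

/-- The median operation on three integers. -/
def medianOp : (Fin 3 → ℤ) → ℤ := fun t =>
  max (max (min (t 0) (t 1)) (min (t 1) (t 2))) (min (t 0) (t 2))

/-- The canonical embedding `ℤ^m → ℝ^m`. -/
def toR {m : ℕ} (z : Fin m → ℤ) : Fin m → ℝ := fun l => (z l : ℝ)

/-- The integer neighborhood `N(x)` of a real vector `x`. -/
def intNbhd {m : ℕ} (x : Fin m → ℝ) : Set (Fin m → ℤ) :=
  {z | ∀ j, |(z j : ℝ) - x j| < 1}

/-- `S` is midpoint-neighbor-closed: for all `x, y ∈ S`, `N((x+y)/2) ⊆ S`. -/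
def MidpointNeighborClosed {m : ℕ} (S : Set (Fin m → ℤ)) : Prop :=
  ∀ x ∈ S, ∀ y ∈ S, ∀ z : Fin m → ℤ,
    (∀ j, |(z j : ℝ) - ((x j : ℝ) + (y j : ℝ)) / 2| < 1) → z ∈ S

/-- `S ⊆ ℤ^m` is integrally convex. -/
def IntegrallyConvex {m : ℕ} (S : Set (Fin m → ℤ)) : Prop :=
  ∀ x : Fin m → ℝ, x ∈ convexHull ℝ (toR '' S) →
    x ∈ convexHull ℝ (toR '' (S ∩ intNbhd x))

/-- The closed convex closure of `T ⊆ ℤ^m` inside `ℝ^m`: the intersection of all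
topologically closed convex sets containing `T`. -/
def closedConvexClosure {m : ℕ} (T : Set (Fin m → ℤ)) : Set (Fin m → ℝ) :=
  ⋂₀ {C : Set (Fin m → ℝ) | Convex ℝ C ∧ IsClosed C ∧ toR '' T ⊆ C}

/-- `S = cl_conv̄(S) ∩ ℤ^m`. -/
def ClosedConvexIntegral {m : ℕ} (S : Set (Fin m → ℤ)) : Prop :=
  S = {z : Fin m → ℤ | toR z ∈ closedConvexClosure S}

/-- All entries of `A` lie in `{0, -1, +1}`. -/
def UnitMatrix {mR n : ℕ} (A : Matrix (Fin mR) (Fin n) ℤ) : Prop :=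
  ∀ i j, A i j = 0 ∨ A i j = -1 ∨ A i j = 1

/-- Each row of `A` has at most `c` nonzero entries. -/
def RowSupportLE {mR n : ℕ} (A : Matrix (Fin mR) (Fin n) ℤ) (c : ℕ) : Prop :=
  ∀ i, {j | A i j ≠ 0}.ncard ≤ c

/-- `S` is representable by a UTVPI system. -/
def RepUTVPI {n : ℕ} (S : Set (Fin n → ℤ)) : Prop :=
  ∃ (mR : ℕ) (A : Matrix (Fin mR) (Fin n) ℤ) (b : Fin mR → ℝ),
    UnitMatrix A ∧ RowSupportLE A 2 ∧
    S = {x | ∀ i, b i ≤ ((∑ j, A i j * x j : ℤ) : ℝ)}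

/-- `S` is representable by an SVPI system. -/
def RepSVPI {n : ℕ} (S : Set (Fin n → ℤ)) : Prop :=
  ∃ (mR : ℕ) (A : Matrix (Fin mR) (Fin n) ℤ) (b : Fin mR → ℝ),
    UnitMatrix A ∧ RowSupportLE A 1 ∧
    S = {x | ∀ i, b i ≤ ((∑ j, A i j * x j : ℤ) : ℝ)}

/-- `S` is representable by a DC system. -/
def RepDC {n : ℕ} (S : Set (Fin n → ℤ)) : Prop :=
  ∃ (mR : ℕ) (A : Matrix (Fin mR) (Fin n) ℤ) (b : Fin mR → ℝ),
    UnitMatrix A ∧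
    (∀ i, {j | A i j = 1}.ncard ≤ 1) ∧ (∀ i, {j | A i j = -1}.ncard ≤ 1) ∧
    S = {x | ∀ i, b i ≤ ((∑ j, A i j * x j : ℤ) : ℝ)}

/-- `S` is representable by a TVPI system with possibly infinitely many inequalities. -/
def RepTVPIInf {n : ℕ} (S : Set (Fin n → ℤ)) : Prop :=
  ∃ (I : Type) (a1 a2 b : I → ℝ) (p q : I → Fin n),
    S = {x | ∀ i : I, b i ≤ a1 i * (x (p i) : ℝ) + a2 i * (x (q i) : ℝ)}

/-- `S` is 2-decomposable: `S = ⋈_{i<j} π_{i,j}(S)`. -/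
def TwoDecomposable {ι : Type*} [LinearOrder ι] (S : Set (ι → ℤ)) : Prop :=
  S = {x | ∀ i j : ι, i < j → ∃ s ∈ S, s i = x i ∧ s j = x j}

/-! A set closed under a majority operation is determined by its projections onto pairs of
coordinates (Baker–Pixley): given `x` whose every pair of coordinates is realised in `S`, induct on
the set `I` of coordinates to be matched; once `I` has three distinct elements `a, b, c`, the
majority of elements of `S` matching `x` on `I \ {a}`, `I \ {b}`, `I \ {c}` matches `x` on all
of `I`. The median is a majority operation, and the median-closed sets are closed under
projections, joins and intersections, which gives both directions. -/

theorem isMajorityOp_medianOp : IsMajorityOp medianOp := by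
  intro a b
  simp only [medianOp, Matrix.cons_val_zero, Matrix.cons_val_one, Matrix.cons_val_two,
    Matrix.head_cons, Matrix.tail_cons]
  omega

theorem Finset.exists_ne_subset_pair_of_card_le_two {α : Type*} [DecidableEq α] [Nontrivial α]
    {s : Finset α} (hs : s.card ≤ 2) : ∃ a b, a ≠ b ∧ s ⊆ {a, b} := by
  interval_cases hcard : s.card
  · obtain ⟨a, b, hab⟩ := exists_pair_ne α
    exact ⟨a, b, hab, by simp [Finset.card_eq_zero.mp hcard]⟩
  · obtain ⟨a, rfl⟩ := Finset.card_eq_one.mp hcard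
    obtain ⟨b, hba⟩ := exists_ne a
    exact ⟨a, b, hba.symm, by simp⟩
  · obtain ⟨a, b, hab, rfl⟩ := Finset.card_eq_two.mp hcard
    exact ⟨a, b, hab, subset_rfl⟩

section Closure

variable {k m : ℕ} (f : (Fin k → ℤ) → ℤ) (S : Set (Fin m → ℤ))

theorem subset_clOp : S ⊆ clOp f S :=
  fun _ hx => Set.mem_sInter.mpr fun _ hT => hT.1 hx

theorem cptClosed_clOp : CptClosed f (clOp f S) :=
  fun x hx => Set.mem_sInter.mpr fun T hT => hT.2 x fun l => Set.mem_sInter.mp (hx l) T hT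

variable {f S}

theorem CptClosed.clOp_eq (hS : CptClosed f S) : clOp f S = S :=
  (Set.sInter_subset_of_mem (show S ∈ {T | S ⊆ T ∧ CptClosed f T} from ⟨subset_rfl, hS⟩)).antisymm
    (subset_clOp f S)

end Closure

section Projections

variable {k n : ℕ} (f : (Fin k → ℤ) → ℤ) (i j : Fin n)

theorem proj2_componentwise (x : Fin k → Fin n → ℤ) :
    (fun m => f fun l => proj2 i j (x l) m) = proj2 i j (fun i' => f fun l => x l i') := by
  ext m
  fin_cases m <;> rfl

theorem mem_projSet_iff {S : Set (Fin n → ℤ)} {x : Fin n → ℤ} :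
    proj2 i j x ∈ projSet i j S ↔ ∃ s ∈ S, s i = x i ∧ s j = x j := by
  simp [projSet, proj2, Matrix.vecCons_inj]

variable {f}

theorem CptClosed.projSet {S : Set (Fin n → ℤ)} (hS : CptClosed f S) :
    CptClosed f (projSet i j S) := by
  intro y hy
  choose s hsS hsy using hy
  obtain rfl : y = fun l => proj2 i j (s l) := funext fun l => (hsy l).symm
  rw [proj2_componentwise]
  exact Set.mem_image_of_mem _ (hS s hsS)

theorem cptClosed_joinPairs {F : Fin n → Fin n → Set (Fin 2 → ℤ)}
    (hF : ∀ i j, CptClosed f (F i j)) : CptClosed f (joinPairs F) := by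
  intro x hx i j hij
  rw [← proj2_componentwise]
  exact hF i j _ fun l => hx l i j hij

theorem joinPairs_projSet (S : Set (Fin n → ℤ)) :
    joinPairs (fun i j => projSet i j S) =
      {x | ∀ i j : Fin n, i < j → ∃ s ∈ S, s i = x i ∧ s j = x j} := by
  ext x
  simp only [joinPairs, mem_projSet_iff]

end Projections

section Majority

variable {ι : Type*} {f : (Fin 3 → ℤ) → ℤ} {S : Set (ι → ℤ)} {x : ι → ℤ}

theorem CptClosed.exists_eqOn_of_eqOn_erase [DecidableEq ι] (hf : IsMajorityOp f)
    (hS : CptClosed f S) {I : Finset ι} {a b c : ι} (hab : a ≠ b) (hac : a ≠ c) (hbc : b ≠ c)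
    (ha : ∃ s ∈ S, Set.EqOn s x (I.erase a)) (hb : ∃ s ∈ S, Set.EqOn s x (I.erase b))
    (hc : ∃ s ∈ S, Set.EqOn s x (I.erase c)) : ∃ s ∈ S, Set.EqOn s x I := by
  obtain ⟨s₁, hs₁, h₁⟩ := ha
  obtain ⟨s₂, hs₂, h₂⟩ := hb
  obtain ⟨s₃, hs₃, h₃⟩ := hc
  refine ⟨_, hS ![s₁, s₂, s₃] (by simp [Fin.forall_fin_succ, hs₁, hs₂, hs₃]), fun i hi => ?_⟩
  have hcoord : (fun l => ![s₁, s₂, s₃] l i) = ![s₁ i, s₂ i, s₃ i] := by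
    ext l
    fin_cases l <;> rfl
  have hi' : ∀ {d}, i ≠ d → i ∈ I.erase d := fun h => Finset.mem_erase.mpr ⟨h, hi⟩
  show f (fun l => ![s₁, s₂, s₃] l i) = x i
  rw [hcoord]
  by_cases hia : i = a
  · subst hia
    rw [h₂ (hi' hab), h₃ (hi' hac)]
    exact (hf _ _).2.2
  by_cases hib : i = b
  · subst hib
    rw [h₁ (hi' hia), h₃ (hi' hbc)]
    exact (hf _ _).2.1
  · rw [h₁ (hi' hia), h₂ (hi' hib)]
    exact (hf _ _).1

theorem CptClosed.exists_eqOn_of_forall_pairs [Nontrivial ι] (hf : IsMajorityOp f)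
    (hS : CptClosed f S) (hx : ∀ i j, i ≠ j → ∃ s ∈ S, s i = x i ∧ s j = x j)
    (I : Finset ι) : ∃ s ∈ S, Set.EqOn s x I := by
  classical
  induction I using Finset.strongInduction with
  | H I ih =>
    by_cases hI : 2 < I.card
    · obtain ⟨a, ha, b, hb, c, hc, hab, hac, hbc⟩ := Finset.two_lt_card.mp hI
      exact hS.exists_eqOn_of_eqOn_erase hf hab hac hbc (ih _ (Finset.erase_ssubset ha))
        (ih _ (Finset.erase_ssubset hb)) (ih _ (Finset.erase_ssubset hc))
    · obtain ⟨i, j, hij, hIij⟩ := Finset.exists_ne_subset_pair_of_card_le_two (not_lt.mp hI)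
      obtain ⟨s, hs, hsi, hsj⟩ := hx i j hij
      refine ⟨s, hs, fun l hl => ?_⟩
      rcases Finset.mem_insert.mp (hIij hl) with rfl | hl
      · exact hsi
      · rwa [Finset.mem_singleton.mp hl]

theorem CptClosed.mem_of_forall_pairs [Finite ι] [Nontrivial ι] (hf : IsMajorityOp f)
    (hS : CptClosed f S) (hx : ∀ i j, i ≠ j → ∃ s ∈ S, s i = x i ∧ s j = x j) : x ∈ S := by
  have := Fintype.ofFinite ι
  obtain ⟨s, hs, hsx⟩ := hS.exists_eqOn_of_forall_pairs hf hx Finset.univ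
  obtain rfl : s = x := funext fun i => hsx (Finset.mem_univ i)
  exact hs

theorem CptClosed.twoDecomposable [LinearOrder ι] [Finite ι] [Nontrivial ι]
    (hf : IsMajorityOp f) (hS : CptClosed f S) : TwoDecomposable S := by
  refine Set.Subset.antisymm (fun s hs i j _ => ⟨s, hs, rfl, rfl⟩) fun x hx => ?_
  refine hS.mem_of_forall_pairs hf fun i j hij => ?_
  rcases hij.lt_or_gt with h | h
  · exact hx i j h
  · obtain ⟨s, hs, hsj, hsi⟩ := hx j i h
    exact ⟨s, hs, hsi, hsj⟩

end Majority

/-- `S` is median-closed iff `S = ⋈_{i<j} cl_median(π_{i,j}(S))`. -/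
theorem stmt_10 {n : ℕ} (hn : 2 ≤ n) (S : Set (Fin n → ℤ)) :
    CptClosed medianOp S ↔
      S = joinPairs (fun i j => clOp medianOp (projSet i j S)) := by
  constructor
  · intro hS
    have : Nontrivial (Fin n) := Fin.nontrivial_iff_two_le.mpr hn
    have hproj : ∀ i j, clOp medianOp (projSet i j S) = projSet i j S :=
      fun i j => (hS.projSet i j).clOp_eq
    simp only [hproj, joinPairs_projSet]
    exact hS.twoDecomposable isMajorityOp_medianOp
  · intro h
    rw [h]
    exact cptClosed_joinPairs fun i j => cptClosed_clOp _ _
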